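/- arXiv:1707.07275 — 7 statements merged into one kernel-verified Lean document; each statement's English description precedes it below -/
import Mathlib

section
/- The biased permutation likelihoods form a probability distribution: for any vector q of strictly positive reals indexed by {1,…,n}, the sum over all permutations π of {1,…,n} of ∏_{i=1}^{n} q_{π(i)} / (∑_{j=i}^{n} q_{π(j)}) equals 1. -/
/-!
Split a permutation of `Fin (n + 1)` by `Equiv.Perm.decomposeFin` into its first entry `p = π 0`
and a permutation of the remaining `n` positions. The first factor of `L q π` is `q p / ∑ q`, and the
remaining factors are the likelihood of that smaller permutation for the items other than `p`
(enumerated as `Equiv.swap 0 p ∘ Fin.succ`), which sum to `1` by induction; summing `q p / ∑ q` over `p` gives `1`.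
-/

open Finset

/-- Biased permutation likelihood. -/
noncomputable def L {n : ℕ} (q : Fin n → ℝ) (π : Equiv.Perm (Fin n)) : ℝ :=
  ∏ i : Fin n, q (π i) / ∑ j ∈ Finset.Ici i, q (π j)

theorem L_decomposeFin_symm {n : ℕ} (q : Fin (n + 1) → ℝ) (p : Fin (n + 1))
    (e : Equiv.Perm (Fin n)) :
    L q (Equiv.Perm.decomposeFin.symm (p, e)) =
      q p / (∑ i, q i) * L (fun i => q (Equiv.swap 0 p i.succ)) e := by
  set π := Equiv.Perm.decomposeFin.symm (p, e)
  have hπ_succ (i : Fin n) : π i.succ = Equiv.swap 0 p (e i).succ :=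
    Equiv.Perm.decomposeFin_symm_apply_succ e p i
  have hfirst : q (π 0) / ∑ j ∈ Ici 0, q (π j) = q p / ∑ i, q i := by
    rw [Equiv.Perm.decomposeFin_symm_apply_zero, ← bot_eq_zero, Ici_bot, Equiv.sum_comp π q]
  unfold L
  rw [Fin.prod_univ_succ, hfirst]
  congr 1
  refine prod_congr rfl fun i _ => ?_
  simp only [Fin.sum_Ici_succ, hπ_succ]

theorem likelihood_sums_to_one (n : ℕ) (q : Fin n → ℝ) (hq : ∀ i, 0 < q i) :
    ∑ π : Equiv.Perm (Fin n), L q π = 1 := by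
  induction n with
  | zero => simp [L]
  | succ n ih =>
    have htotal : ∑ i, q i ≠ 0 := (sum_pos (fun i _ => hq i) univ_nonempty).ne'
    have hfirst (p : Fin (n + 1)) :
        ∑ e : Equiv.Perm (Fin n), L q (Equiv.Perm.decomposeFin.symm (p, e)) =
          q p / ∑ i, q i := by
      simp_rw [L_decomposeFin_symm, ← mul_sum, ih _ fun i => hq _, mul_one]
    rw [← Equiv.sum_comp Equiv.Perm.decomposeFin.symm, Fintype.sum_prod_type]
    simp_rw [hfirst]
    rw [← sum_div, div_self htotal]
end

section
/- Let q be a vector of strictly positive reals and σ a permutation with q_{σ(1)} ≤ ⋯ ≤ q_{σ(n)}. Then the increasing arrangement minimizes the biased permutation likelihood: for every permutation π, L(q | σ) ≤ L(q | π), where L(q | π) = ∏_{i=1}^{n} q_{π(i)} / (∑_{j=i}^{n} q_{π(j)}). -/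
/-!
Every `L q π` has the same numerator `∏ i, q i`, so it suffices to compare denominators factor by
factor: the tail sum `∑_{j ≥ i} q (π j)` is largest when the tail holds the largest entries of
`q`, i.e. for the increasing arrangement `σ`. This is the rearrangement inequality for the
indicator weights of the upper set `{j ≥ i}`.
-/

open Finset

theorem Monotone.sum_comp_perm_le_of_isUpperSet {ι β : Type*} [Fintype ι] [LinearOrder ι]
    [AddCommMonoid β] [LinearOrder β] [IsOrderedCancelAddMonoid β]
    {g : ι → β} (hg : Monotone g) (τ : Equiv.Perm ι) {s : Finset ι}
    (hs : IsUpperSet (s : Set ι)) :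
    ∑ j ∈ s, g (τ j) ≤ ∑ j ∈ s, g j := by
  classical
  let w : ι → ℕ := fun j => if j ∈ s then 1 else 0
  have hw : Monotone w := fun i j hij => by
    by_cases hi : i ∈ s
    · simp [w, hi, show j ∈ s from hs hij hi]
    · simp [w, hi]
  have key := (hw.monovary hg).sum_smul_comp_perm_le_sum_smul (σ := τ)
  simpa only [w, ite_smul, one_smul, zero_smul, sum_ite_mem, univ_inter] using key

theorem sum_Ici_pos {ι : Type*} [Preorder ι] [LocallyFiniteOrderTop ι] {f : ι → ℝ}
    (hf : ∀ j, 0 < f j) (i : ι) : 0 < ∑ j ∈ Ici i, f j :=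
  sum_pos (fun j _ => hf j) ⟨i, mem_Ici.mpr le_rfl⟩

theorem L_eq_prod_div_prod {n : ℕ} (q : Fin n → ℝ) (π : Equiv.Perm (Fin n)) :
    L q π = (∏ i, q i) / ∏ i, ∑ j ∈ Ici i, q (π j) := by
  rw [L, prod_div_distrib, Equiv.prod_comp π q]

theorem increasing_minimizes_likelihood (n : ℕ) (q : Fin n → ℝ) (hq : ∀ i, 0 < q i)
    (σ : Equiv.Perm (Fin n)) (hσ : Monotone fun j => q (σ j))
    (π : Equiv.Perm (Fin n)) :
    L q σ ≤ L q π := by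
  have htail : ∀ i, ∑ j ∈ Ici i, q (π j) ≤ ∑ j ∈ Ici i, q (σ j) := fun i => by
    simpa only [Function.comp_def, Equiv.Perm.coe_mul, Equiv.apply_symm_apply] using
      hσ.sum_comp_perm_le_of_isUpperSet (σ.symm * π) (s := Ici i)
        (by simpa only [coe_Ici] using isUpperSet_Ici i)
  rw [L_eq_prod_div_prod, L_eq_prod_div_prod]
  exact div_le_div_of_nonneg_left (prod_nonneg fun i _ => (hq i).le)
    (prod_pos fun i _ => sum_Ici_pos (fun j => hq (π j)) i)
    (prod_le_prod (fun i _ => (sum_Ici_pos (fun j => hq (π j)) i).le) fun i _ => htail i)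
end

section
/- Define recursively g_π(u, k) for u ∈ (0,1] and k ∈ {1,…,n} by g_π(u, n) = ∫_0^u q_{π(n)} v^{q_{π(n)}−1} dv and g_π(u, k) = ∫_0^u q_{π(k)} v^{q_{π(k)}−1} g_π(v, k+1) dv for k < n, where q_{π(i)} > 0 for all i. Then g_π(u, k) = ∏_{i=k}^{n} (q_{π(i)} · u^{q_{π(i)}}) / (∑_{j=i}^{n} q_{π(j)}). In particular, g_π(1, 1) = ∏_{i=1}^{n} q_{π(i)} / (∑_{j=i}^{n} q_{π(j)}). -/
/-!
By backward induction on `k`, `g (·, k)` is a monomial `c_k u ^ S_k` on `(0, 1]`, where `S_k` is the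
tail sum `∑_{j ≥ k} q_{π j}`: integrating `q v ^ (q - 1) · c v ^ S` over `(0, u)` gives
`q c / (q + S) · u ^ (q + S)`, so each step multiplies the coefficient by `q_{π k} / S_k` and adds
`q_{π k}` to the exponent. Splitting `u ^ S_k` into a product of powers gives the stated formula.
-/

open Finset MeasureTheory

lemma integral_Ioo_const_mul_rpow_sub_one (c : ℝ) {u p : ℝ} (hu : 0 < u) (hp : 0 < p) :
    ∫ v in Set.Ioo 0 u, c * v ^ (p - 1) = c * u ^ p / p := by
  rw [integral_const_mul, ← integral_Ioc_eq_integral_Ioo, ← intervalIntegral.integral_of_le hu.le,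
    integral_rpow (Or.inl (by linarith)), sub_add_cancel, Real.zero_rpow hp.ne', sub_zero,
    mul_div_assoc]

lemma integral_Ioo_mul_rpow_sub_one_mul_rpow (C : ℝ) {u a s : ℝ} (hu : 0 < u)
    (has : 0 < a + s) :
    ∫ v in Set.Ioo 0 u, a * v ^ (a - 1) * (C * v ^ s) = a * C / (a + s) * u ^ (a + s) := by
  have hmonomial : Set.EqOn (fun v ↦ a * v ^ (a - 1) * (C * v ^ s))
      (fun v ↦ a * C * v ^ (a + s - 1)) (Set.Ioo 0 u) := fun v hv ↦ by
    dsimp only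
    rw [add_sub_right_comm, Real.rpow_add hv.1]
    ring
  rw [setIntegral_congr_fun measurableSet_Ioo hmonomial,
    integral_Ioo_const_mul_rpow_sub_one _ hu has]
  ring

lemma Fin.Ici_castSucc {n : ℕ} (k : Fin n) :
    Ici k.castSucc = (Ici k.succ).cons k.castSucc (by simp) := by
  rw [Ici_eq_cons_Ioi]
  congr
  ext i
  simp [Fin.castSucc_lt_iff_succ_le]

lemma prod_mul_rpow_div_eq_mul_rpow_sum {ι : Type*} (s : Finset ι) (p S : ι → ℝ) {u : ℝ}
    (hu : 0 < u) :
    ∏ i ∈ s, p i * u ^ p i / S i = (∏ i ∈ s, p i / S i) * u ^ ∑ i ∈ s, p i := by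
  rw [Real.rpow_sum_of_pos hu, ← prod_mul_distrib]
  exact prod_congr rfl fun i _ ↦ by ring

theorem iterated_integral_eq_mul_rpow {n : ℕ} (p : Fin (n + 1) → ℝ) (hp : ∀ i, 0 < p i)
    (g : ℝ → Fin (n + 1) → ℝ)
    (hlast : ∀ u ∈ Set.Ioc (0 : ℝ) 1,
      g u (Fin.last n) = ∫ v in Set.Ioo (0 : ℝ) u, p (Fin.last n) * v ^ (p (Fin.last n) - 1))
    (hrec : ∀ u ∈ Set.Ioc (0 : ℝ) 1, ∀ k : Fin n,
      g u k.castSucc = ∫ v in Set.Ioo (0 : ℝ) u, p k.castSucc * v ^ (p k.castSucc - 1) * g v k.succ)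
    (k : Fin (n + 1)) :
    ∀ u ∈ Set.Ioc (0 : ℝ) 1,
      g u k = (∏ i ∈ Ici k, p i / ∑ j ∈ Ici i, p j) * u ^ ∑ j ∈ Ici k, p j := by
  induction k using Fin.reverseInduction with
  | last =>
    intro u hu
    rw [hlast u hu, integral_Ioo_const_mul_rpow_sub_one _ hu.1 (hp _)]
    have hIci_last : Ici (Fin.last n) = {Fin.last n} := Ici_top
    simp only [hIci_last, prod_singleton, sum_singleton]
    ring
  | cast k ih =>
    intro u hu
    have hsum_pos : 0 < ∑ j ∈ Ici k.succ, p j :=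
      sum_pos (fun j _ ↦ hp j) ⟨k.succ, mem_Ici.mpr le_rfl⟩
    have hg_succ : Set.EqOn (fun v ↦ p k.castSucc * v ^ (p k.castSucc - 1) * g v k.succ)
        (fun v ↦ p k.castSucc * v ^ (p k.castSucc - 1) *
          ((∏ i ∈ Ici k.succ, p i / ∑ j ∈ Ici i, p j) * v ^ ∑ j ∈ Ici k.succ, p j))
        (Set.Ioo 0 u) := fun v hv ↦ by
      dsimp only
      rw [ih v ⟨hv.1, hv.2.le.trans hu.2⟩]
    rw [hrec u hu k, setIntegral_congr_fun measurableSet_Ioo hg_succ,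
      integral_Ioo_mul_rpow_sub_one_mul_rpow _ hu.1 (add_pos (hp _) hsum_pos)]
    simp only [Fin.Ici_castSucc, prod_cons, sum_cons]
    ring

theorem iterated_integral_formula (n : ℕ) (q : Fin (n + 1) → ℝ) (hq : ∀ i, 0 < q i)
    (π : Equiv.Perm (Fin (n + 1))) (g : ℝ → Fin (n + 1) → ℝ)
    (hlast : ∀ u ∈ Set.Ioc (0 : ℝ) 1,
      g u (Fin.last n) =
        ∫ v in Set.Ioo (0 : ℝ) u, q (π (Fin.last n)) * v ^ (q (π (Fin.last n)) - 1))
    (hrec : ∀ u ∈ Set.Ioc (0 : ℝ) 1, ∀ k : Fin n,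
      g u k.castSucc =
        ∫ v in Set.Ioo (0 : ℝ) u,
          q (π k.castSucc) * v ^ (q (π k.castSucc) - 1) * g v k.succ) :
    (∀ u ∈ Set.Ioc (0 : ℝ) 1, ∀ k : Fin (n + 1),
        g u k = ∏ i ∈ Finset.Ici k, q (π i) * u ^ q (π i) / ∑ j ∈ Finset.Ici i, q (π j)) ∧
      g 1 0 = ∏ i : Fin (n + 1), q (π i) / ∑ j ∈ Finset.Ici i, q (π j) := by
  have hclosed := iterated_integral_eq_mul_rpow (q ∘ π) (fun i ↦ hq (π i)) g hlast hrec
  refine ⟨fun u hu k ↦ ?_, ?_⟩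
  · rw [hclosed k u hu, prod_mul_rpow_div_eq_mul_rpow_sum _ _ _ hu.1]
    rfl
  · rw [hclosed 0 1 ⟨one_pos, le_rfl⟩, Real.one_rpow, mul_one, Ici_zero_eq_univ]
    rfl
end

section
/- For strictly positive reals q_1, …, q_n and n independent random variables X_1, …, X_n where X_i is exponentially distributed with rate q_i, the probability of the ordering event {X_{π(1)} < X_{π(2)} < ⋯ < X_{π(n)}} equals ∏_{i=1}^{n} q_{π(i)} / (∑_{j=i}^{n} q_{π(j)}) for every permutation π of {1,…,n}. -/
/-! Independence makes the law of `(X (π i))ᵢ` the product of the exponential laws, so it is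
enough to compute the product measure of the set of increasing tuples. Conditioning on the first
coordinate `t`, the others must be increasing and all exceed `t`; by memorylessness the measure
of `{x | StrictMono x ∧ ∀ i, a < x i}` is `exp (-(∑ r) a) * ∏ᵢ rᵢ / ∑_{j ≥ i} rⱼ` for `a ≥ 0`,
and integrating `exp (-R t)` against `Exp(r₀)` over `t > a` produces the factor
`r₀ / (r₀ + R)`. -/

open Finset MeasureTheory ProbabilityTheory

section

open Set Real

lemma measurableSet_setOf_strictMono {ι : Type*} [Preorder ι] [Countable ι] :
    MeasurableSet {x : ι → ℝ | StrictMono x} := by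
  simp only [StrictMono, ofPred_forall]
  exact .iInter fun i ↦ .iInter fun j ↦ .iInter fun _ ↦
    measurableSet_lt (measurable_pi_apply i) (measurable_pi_apply j)

lemma measurableSet_setOf_strictMono_and_lt {ι : Type*} [Preorder ι] [Countable ι] (a : ℝ) :
    MeasurableSet {x : ι → ℝ | StrictMono x ∧ ∀ i, a < x i} := by
  simp only [ofPred_and, ofPred_forall]
  exact measurableSet_setOf_strictMono.inter
    (.iInter fun i ↦ measurableSet_lt measurable_const (measurable_pi_apply i))

theorem MeasureTheory.Measure.pi_apply_eq_lintegral_cons {n : ℕ} {α : Type*} [MeasurableSpace α]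
    (μ : Fin (n + 1) → Measure α) [∀ i, SigmaFinite (μ i)] {s : Set (Fin (n + 1) → α)}
    (hs : MeasurableSet s) :
    Measure.pi μ s = ∫⁻ t, Measure.pi (fun j ↦ μ j.succ) {y | Fin.cons t y ∈ s} ∂μ 0 := by
  have e := (measurePreserving_piFinSuccAbove μ 0).symm
  rw [← e.measure_preimage hs.nullMeasurableSet, Measure.prod_apply (hs.preimage e.measurable)]
  refine lintegral_congr fun t ↦ ?_
  congr 1
  ext y
  simp [MeasurableEquiv.piFinSuccAbove_symm_apply]
  rfl

namespace ProbabilityTheory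

lemma expMeasure_eq_withDensity (r : ℝ) :
    expMeasure r = volume.withDensity (exponentialPDF r) := rfl

lemma expMeasure_Iic_zero (r : ℝ) : expMeasure r (Iic 0) = 0 := by
  rw [expMeasure_eq_withDensity, withDensity_apply _ measurableSet_Iic,
    ← setLIntegral_congr Iio_ae_eq_Iic]
  exact lintegral_exponentialPDF_of_nonpos le_rfl

lemma ae_pos_expMeasure (r : ℝ) : ∀ᵐ t ∂expMeasure r, 0 < t := by
  simpa [ae_iff, ← Iic_def] using expMeasure_Iic_zero r

lemma setLIntegral_exp_neg_mul_expMeasure {r s a : ℝ} (hr : 0 < r) (hrs : 0 < r + s)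
    (ha : 0 ≤ a) :
    ∫⁻ t in Ioi a, ENNReal.ofReal (exp (-(s * t))) ∂expMeasure r =
      ENNReal.ofReal (r / (r + s) * exp (-((r + s) * a))) := by
  have hdens : ∀ t ∈ Ioi a, (exponentialPDF r * fun t ↦ ENNReal.ofReal (exp (-(s * t)))) t =
      ENNReal.ofReal (r * exp (-(r + s) * t)) := fun t ht ↦ by
    rw [Pi.mul_apply, exponentialPDF_of_nonneg (ha.trans ht.le),
      ← ENNReal.ofReal_mul (by positivity), mul_assoc, ← exp_add]
    ring_nf
  have hint : IntegrableOn (fun t ↦ r * exp (-(r + s) * t)) (Ioi a) :=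
    (integrableOn_exp_mul_Ioi (by linarith) a).const_mul r
  have hpdf : Measurable (exponentialPDF r) := (measurable_exponentialPDFReal r).ennreal_ofReal
  rw [expMeasure_eq_withDensity,
    setLIntegral_withDensity_eq_setLIntegral_mul _ hpdf (by fun_prop) measurableSet_Ioi,
    setLIntegral_congr_fun measurableSet_Ioi hdens,
    ← ofReal_integral_eq_lintegral_ofReal hint (.of_forall fun t ↦ by positivity),
    integral_const_mul, integral_exp_mul_Ioi (by linarith)]
  congr 1
  field_simp

lemma pi_expMeasure_setOf_strictMono_and_lt {n : ℕ} (r : Fin n → ℝ) (hr : ∀ i, 0 < r i) {a : ℝ}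
    (ha : 0 ≤ a) :
    Measure.pi (fun i ↦ expMeasure (r i)) {x | StrictMono x ∧ ∀ i, a < x i} =
      ENNReal.ofReal (exp (-((∑ i, r i) * a)) * ∏ i, r i / ∑ j ∈ Ici i, r j) := by
  induction n generalizing a with
  | zero => simp [Subsingleton.strictMono]
  | succ n ih =>
    have := fun i ↦ isProbabilityMeasure_expMeasure (hr i)
    set R := ∑ i : Fin n, r i.succ
    set c := ∏ i : Fin n, r i.succ / ∑ j ∈ Ici i, r j.succ
    have hR : 0 ≤ R := sum_nonneg fun j _ ↦ (hr _).le
    have hsection : ∀ t, {y : Fin n → ℝ | (Fin.cons t y : Fin (n + 1) → ℝ) ∈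
        {x | StrictMono x ∧ ∀ i, a < x i}} =
        if a < t then {y | StrictMono y ∧ ∀ i, t < y i} else ∅ := fun t ↦ by
      ext y
      split_ifs with hat
      · simp only [mem_ofPred_eq, Fin.strictMono_cons, Fin.forall_fin_succ, Fin.cons_zero,
          Fin.cons_succ]
        exact ⟨fun h ↦ ⟨h.1.2, h.1.1⟩, fun h ↦ ⟨⟨h.2, h.1⟩, hat, fun i ↦ hat.trans (h.2 i)⟩⟩
      · simp only [mem_ofPred_eq, Fin.forall_fin_succ, Fin.cons_zero, mem_empty_iff_false,
          iff_false]
        exact fun h ↦ hat h.2.1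
    calc Measure.pi (fun i ↦ expMeasure (r i)) {x | StrictMono x ∧ ∀ i, a < x i}
        = ∫⁻ t in Ioi a, Measure.pi (fun i : Fin n ↦ expMeasure (r i.succ))
            {y | StrictMono y ∧ ∀ i, t < y i} ∂expMeasure (r 0) := by
          rw [Measure.pi_apply_eq_lintegral_cons _ (measurableSet_setOf_strictMono_and_lt a),
            ← lintegral_indicator measurableSet_Ioi]
          refine lintegral_congr fun t ↦ ?_
          rw [hsection]
          split_ifs with hat <;> simp [hat]
      _ = ∫⁻ t in Ioi a, ENNReal.ofReal (exp (-(R * t))) * ENNReal.ofReal c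
            ∂expMeasure (r 0) := by
          refine setLIntegral_congr_fun measurableSet_Ioi fun t ht ↦ ?_
          rw [ih _ (fun i ↦ hr _) (ha.trans ht.le), ENNReal.ofReal_mul (exp_pos _).le]
      _ = ENNReal.ofReal (r 0 / (r 0 + R) * exp (-((r 0 + R) * a)) * c) := by
          rw [lintegral_mul_const _ (by fun_prop),
            setLIntegral_exp_neg_mul_expMeasure (hr 0) (by linarith [hr 0]) ha,
            ← ENNReal.ofReal_mul (mul_nonneg (div_nonneg (hr 0).le (by linarith [hr 0]))
              (exp_pos _).le)]
      _ = _ := by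
          have hIci : Finset.Ici (0 : Fin (n + 1)) = Finset.univ := Ici_bot
          rw [Fin.sum_univ_succ, Fin.prod_univ_succ, hIci, Fin.sum_univ_succ]
          simp only [Fin.sum_Ici_succ, R, c]
          ring_nf

lemma ae_pos_pi_expMeasure {ι : Type*} [Fintype ι] (r : ι → ℝ) (hr : ∀ i, 0 < r i) :
    ∀ᵐ x ∂Measure.pi (fun i ↦ expMeasure (r i)), ∀ i, 0 < x i :=
  have := fun i ↦ isProbabilityMeasure_expMeasure (hr i)
  ae_all_iff.2 fun _ ↦ Measure.tendsto_eval_ae_ae.eventually (ae_pos_expMeasure _)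

lemma pi_expMeasure_setOf_strictMono {n : ℕ} (r : Fin n → ℝ) (hr : ∀ i, 0 < r i) :
    Measure.pi (fun i ↦ expMeasure (r i)) {x | StrictMono x} =
      ENNReal.ofReal (∏ i, r i / ∑ j ∈ Ici i, r j) := by
  have hae : {x : Fin n → ℝ | StrictMono x} =ᵐ[Measure.pi fun i ↦ expMeasure (r i)]
      {x | StrictMono x ∧ ∀ i, 0 < x i} := by
    filter_upwards [ae_pos_pi_expMeasure r hr] with x hx
    exact propext (and_iff_left hx).symm
  rw [measure_congr hae, pi_expMeasure_setOf_strictMono_and_lt r hr le_rfl, mul_zero, neg_zero,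
    exp_zero, one_mul]

end ProbabilityTheory

end

theorem exp_order_probability_general (n : ℕ) {Ω : Type*} [MeasureSpace Ω]
    (P : Measure Ω)
    (q : Fin n → ℝ) (hq : ∀ i, 0 < q i)
    (X : Fin n → Ω → ℝ) (hXm : ∀ i, Measurable (X i))
    (hindep : iIndepFun X P)
    (hdist : ∀ i, Measure.map (X i) P = expMeasure (q i))
    (π : Equiv.Perm (Fin n)) :
    (P {ω | StrictMono fun i => X (π i) ω}).toReal =
      ∏ i : Fin n, q (π i) / ∑ j ∈ Finset.Ici i, q (π j) := by
  have hlaw : HasLaw (fun ω i ↦ X (π i) ω) (Measure.pi fun i ↦ expMeasure (q (π i))) P :=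
    (hindep.precomp π.injective).hasLaw_pi fun i ↦ ⟨(hXm _).aemeasurable, hdist _⟩
  rw [hlaw.measure_eq measurableSet_setOf_strictMono,
    pi_expMeasure_setOf_strictMono _ fun i ↦ hq _, ENNReal.toReal_ofReal]
  exact prod_nonneg fun i _ ↦ div_nonneg (hq _).le (sum_nonneg fun j _ ↦ (hq _).le)

theorem exp_order_probability (n : ℕ) {Ω : Type*} [MeasureSpace Ω]
    (P : Measure Ω) [IsProbabilityMeasure P]
    (q : Fin n → ℝ) (hq : ∀ i, 0 < q i)
    (X : Fin n → Ω → ℝ) (hXm : ∀ i, Measurable (X i))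
    (hindep : iIndepFun X P)
    (hdist : ∀ i, Measure.map (X i) P = expMeasure (q i))
    (π : Equiv.Perm (Fin n)) :
    (P {ω | StrictMono fun i => X (π i) ω}).toReal =
      ∏ i : Fin n, q (π i) / ∑ j ∈ Finset.Ici i, q (π j) :=
  exp_order_probability_general n P q hq X hXm hindep hdist π
end

section
/- For independent random variables V_1, …, V_n with V_i having density v ↦ q_i v^{q_i − 1} on (0, 1) (q_i > 0), and any permutation π of {1,…,n}, the probability P(V_{π(1)} > V_{π(2)} > ⋯ > V_{π(n)}) equals ∏_{i=1}^{n} q_{π(i)} / (∑_{j=i}^{n} q_{π(j)}). -/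
open Finset MeasureTheory ProbabilityTheory

/-!
Independence and the distribution functions identify the law of `(V (π 1), …, V (π n))` with the
product of the power laws `q v ^ (q - 1) dv` on `(0, 1]`. Under that product the event
`x₁ > ⋯ > xₙ` is strengthened to `t > x₁ > ⋯ > xₙ` for `t ∈ [0, 1]`, which has probability
`t ^ (q₁ + ⋯ + qₙ) * ∏ᵢ qᵢ / (qᵢ + ⋯ + qₙ)`: conditioning on `x₁ = s < t` leaves the same event for
`x₂, …, xₙ` below `s`, so by induction the probability is
`∫₀ᵗ q₁ s ^ (q₁ - 1) s ^ Q ds = q₁ / (q₁ + Q) * t ^ (q₁ + Q)`. At `t = 1` the extra constraint holds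
almost surely.
-/

noncomputable def powerLaw (a : ℝ) : Measure ℝ :=
  (volume.restrict (Set.Ioc 0 1)).withDensity fun t => ENNReal.ofReal (a * t ^ (a - 1))

lemma lintegral_Ioc_mul_rpow_sub_one {a : ℝ} (ha : 0 < a) {c : ℝ} (hc : 0 ≤ c) :
    ∫⁻ s in Set.Ioc 0 c, ENNReal.ofReal (a * s ^ (a - 1)) = ENNReal.ofReal (c ^ a) := by
  have hint : IntegrableOn (fun s : ℝ => a * s ^ (a - 1)) (Set.Ioc 0 c) := by
    rw [← intervalIntegrable_iff_integrableOn_Ioc_of_le hc]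
    exact (intervalIntegral.intervalIntegrable_rpow' (by linarith)).const_mul a
  rw [← ofReal_integral_eq_lintegral_ofReal hint
    (ae_restrict_of_forall_mem measurableSet_Ioc fun s hs =>
      mul_nonneg ha.le (Real.rpow_nonneg hs.1.le _)),
    ← intervalIntegral.integral_of_le hc, intervalIntegral.integral_const_mul,
    integral_rpow (Or.inl (by linarith)), sub_add_cancel, Real.zero_rpow ha.ne', sub_zero,
    mul_div_cancel₀ _ ha.ne']

lemma powerLaw_apply (a : ℝ) {s : Set ℝ} (hs : MeasurableSet s) :
    powerLaw a s = ∫⁻ x in s ∩ Set.Ioc 0 1, ENNReal.ofReal (a * x ^ (a - 1)) := by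
  rw [powerLaw, withDensity_apply _ hs, Measure.restrict_restrict hs]

lemma powerLaw_Iic {a : ℝ} (ha : 0 < a) {t : ℝ} (ht₀ : 0 ≤ t) (ht₁ : t ≤ 1) :
    powerLaw a (Set.Iic t) = ENNReal.ofReal (t ^ a) := by
  rw [powerLaw_apply a measurableSet_Iic, Set.Iic_inter_Ioc_of_le ht₁,
    lintegral_Ioc_mul_rpow_sub_one ha ht₀]

lemma isProbabilityMeasure_powerLaw {a : ℝ} (ha : 0 < a) :
    IsProbabilityMeasure (powerLaw a) :=
  ⟨by rw [powerLaw_apply a .univ, Set.univ_inter, lintegral_Ioc_mul_rpow_sub_one ha zero_le_one,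
    Real.one_rpow, ENNReal.ofReal_one]⟩

lemma ae_powerLaw_lt_one (a : ℝ) : ∀ᵐ x ∂powerLaw a, x < 1 := by
  rw [powerLaw, Measure.restrict_congr_set Ioo_ae_eq_Ioc.symm]
  exact (withDensity_absolutelyContinuous _ _).ae_le
    ((ae_restrict_mem measurableSet_Ioo).mono fun x hx => hx.2)

lemma setLIntegral_Iio_powerLaw (a : ℝ) {t : ℝ} (ht : t ≤ 1) (f : ℝ → ENNReal) :
    ∫⁻ s in Set.Iio t, f s ∂powerLaw a
      = ∫⁻ s in Set.Ioo 0 t, ENNReal.ofReal (a * s ^ (a - 1)) * f s := by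
  have hIoo : Set.Iio t ∩ Set.Ioc 0 1 = Set.Ioo 0 t := by
    ext x
    simp only [Set.mem_inter_iff, Set.mem_Iio, Set.mem_Ioc, Set.mem_Ioo]
    exact ⟨fun h => ⟨h.2.1, h.1⟩, fun h => ⟨h.2, h.1, h.2.le.trans ht⟩⟩
  rw [powerLaw, restrict_withDensity measurableSet_Iio, Measure.restrict_restrict measurableSet_Iio,
    hIoo, lintegral_withDensity_eq_lintegral_mul_non_measurable _ (by fun_prop)
      (.of_forall fun _ => ENNReal.ofReal_lt_top)]
  rfl

lemma measure_eq_of_Iic_eq_on_Icc {μ ν : Measure ℝ} [IsProbabilityMeasure μ]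
    [IsProbabilityMeasure ν] {a b : ℝ} (hab : a ≤ b) (hμa : μ (Set.Iic a) = 0)
    (hμb : μ (Set.Iic b) = 1) (h : ∀ t ∈ Set.Icc a b, μ (Set.Iic t) = ν (Set.Iic t)) :
    μ = ν := by
  have hνa : ν (Set.Iic a) = 0 := h a ⟨le_rfl, hab⟩ ▸ hμa
  have hνb : ν (Set.Iic b) = 1 := h b ⟨hab, le_rfl⟩ ▸ hμb
  refine Measure.ext_of_Iic μ ν fun t => ?_
  rcases lt_or_ge t a with hta | hat
  · have hsub := Set.Iic_subset_Iic.2 hta.le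
    rw [measure_mono_null hsub hμa, measure_mono_null hsub hνa]
  rcases le_or_gt t b with htb | hbt
  · exact h t ⟨hat, htb⟩
  · have hsub := Set.Iic_subset_Iic.2 hbt.le
    rw [le_antisymm prob_le_one (hμb ▸ measure_mono hsub),
      le_antisymm prob_le_one (hνb ▸ measure_mono hsub)]

lemma map_eq_powerLaw {Ω : Type*} [MeasurableSpace Ω] {P : Measure Ω} [IsProbabilityMeasure P]
    {X : Ω → ℝ} (hX : Measurable X) {a : ℝ} (ha : 0 < a)
    (hcdf : ∀ t ∈ Set.Icc (0 : ℝ) 1, (P {ω | X ω ≤ t}).toReal = t ^ a) :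
    P.map X = powerLaw a := by
  have := isProbabilityMeasure_powerLaw ha
  have := Measure.isProbabilityMeasure_map (μ := P) hX.aemeasurable
  have hmap : ∀ t ∈ Set.Icc (0 : ℝ) 1, P.map X (Set.Iic t) = ENNReal.ofReal (t ^ a) :=
    fun t ht => by
      rw [Measure.map_apply hX measurableSet_Iic, ← hcdf t ht,
        ENNReal.ofReal_toReal (measure_ne_top _ _)]
      rfl
  refine measure_eq_of_Iic_eq_on_Icc zero_le_one ?_ ?_ fun t ht => ?_
  · rw [hmap 0 ⟨le_rfl, zero_le_one⟩, Real.zero_rpow ha.ne', ENNReal.ofReal_zero]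
  · rw [hmap 1 ⟨zero_le_one, le_rfl⟩, Real.one_rpow, ENNReal.ofReal_one]
  · rw [hmap t ht, powerLaw_Iic ha ht.1 ht.2]

def strictAntiBelow (n : ℕ) (t : ℝ) : Set (Fin n → ℝ) :=
  {x | StrictAnti x ∧ ∀ i, x i < t}

lemma measurableSet_setOf_strictAnti (n : ℕ) :
    MeasurableSet {x : Fin n → ℝ | StrictAnti x} := by
  simp only [StrictAnti, Set.ofPred_forall]
  exact .iInter fun i => .iInter fun j => .iInter fun _ =>
    measurableSet_lt (measurable_pi_apply j) (measurable_pi_apply i)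

lemma measurableSet_strictAntiBelow (n : ℕ) (t : ℝ) :
    MeasurableSet (strictAntiBelow n t) := by
  simp only [strictAntiBelow, Set.ofPred_and, Set.ofPred_forall]
  exact (measurableSet_setOf_strictAnti n).inter
    (.iInter fun i => measurableSet_lt (measurable_pi_apply i) measurable_const)

lemma cons_mem_strictAntiBelow {n : ℕ} {s t : ℝ} {y : Fin n → ℝ} :
    (Fin.cons s y : Fin (n + 1) → ℝ) ∈ strictAntiBelow (n + 1) t ↔
      s < t ∧ y ∈ strictAntiBelow n s := by
  have hcons : StrictAnti (Fin.cons s y : Fin (n + 1) → ℝ) ↔ (∀ i, y i < s) ∧ StrictAnti y :=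
    Fin.liftFun_cons (· > ·)
  constructor
  · rintro ⟨hanti, hlt⟩
    obtain ⟨hys, hy⟩ := hcons.1 hanti
    exact ⟨by simpa using hlt 0, hy, hys⟩
  · rintro ⟨hst, hy, hys⟩
    refine ⟨hcons.2 ⟨hys, hy⟩, Fin.cases hst fun i => ?_⟩
    simpa using (hys i).trans hst

lemma pi_strictAntiBelow_succ {n : ℕ} (μ : Fin (n + 1) → Measure ℝ)
    [∀ i, SigmaFinite (μ i)] (t : ℝ) :
    Measure.pi μ (strictAntiBelow (n + 1) t)
      = ∫⁻ s in Set.Iio t, Measure.pi (fun j => μ j.succ) (strictAntiBelow n s) ∂μ 0 := by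
  -- Fubini after writing `x = Fin.cons s y`
  have hmp := (measurePreserving_piFinSuccAbove μ 0).symm
  simp only [Fin.zero_succAbove] at hmp
  have hslice : ∀ s, Prod.mk s ⁻¹'
      ((MeasurableEquiv.piFinSuccAbove (fun _ => ℝ) 0).symm ⁻¹' strictAntiBelow (n + 1) t)
      = {y | s < t ∧ y ∈ strictAntiBelow n s} := fun s => by
    ext y
    simp [MeasurableEquiv.piFinSuccAbove_symm_apply, Fin.insertNthEquiv, Fin.insertNth_zero',
      cons_mem_strictAntiBelow]
  rw [← hmp.measure_preimage_equiv, Measure.prod_apply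
    (MeasurableEquiv.measurable _ (measurableSet_strictAntiBelow _ _)),
    ← lintegral_indicator measurableSet_Iio]
  refine lintegral_congr fun s => ?_
  rw [hslice]
  by_cases hs : s < t <;> simp [hs]

noncomputable def decreasingOrderProb {n : ℕ} (q : Fin n → ℝ) : ℝ := ∏ i, q i / ∑ j ∈ Ici i, q j

lemma decreasingOrderProb_succ {n : ℕ} (q : Fin (n + 1) → ℝ) :
    decreasingOrderProb q = q 0 / (∑ j, q j) * decreasingOrderProb fun j => q j.succ := by
  rw [decreasingOrderProb, Fin.prod_univ_succ, ← bot_eq_zero, Ici_bot]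
  congr 1
  refine prod_congr rfl fun i _ => ?_
  rw [← Fin.map_succEmb_Ici, sum_map]
  rfl

lemma decreasingOrderProb_nonneg {n : ℕ} {q : Fin n → ℝ} (hq : ∀ i, 0 ≤ q i) :
    0 ≤ decreasingOrderProb q :=
  prod_nonneg fun i _ => div_nonneg (hq i) (sum_nonneg fun j _ => hq j)

theorem pi_powerLaw_strictAntiBelow {n : ℕ} (q : Fin n → ℝ) (hq : ∀ i, 0 < q i) {t : ℝ}
    (ht₀ : 0 ≤ t) (ht₁ : t ≤ 1) :
    Measure.pi (fun i => powerLaw (q i)) (strictAntiBelow n t)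
      = ENNReal.ofReal (t ^ (∑ i, q i) * decreasingOrderProb q) := by
  induction n generalizing t with
  | zero =>
    have : strictAntiBelow 0 t = Set.univ :=
      Set.eq_univ_of_forall fun x => ⟨Subsingleton.strictAnti x, finZeroElim⟩
    simp [this, decreasingOrderProb]
  | succ n ih =>
    have := fun i => isProbabilityMeasure_powerLaw (hq i)
    have ih' := fun s (hs₀ : 0 ≤ s) (hs₁ : s ≤ 1) =>
      ih (fun j => q j.succ) (fun j => hq j.succ) hs₀ hs₁
    set B := ∑ j : Fin n, q j.succ
    set C := decreasingOrderProb fun j => q j.succ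
    have hq₀ := hq 0
    have hB : 0 ≤ B := sum_nonneg fun j _ => (hq j.succ).le
    have hC : 0 ≤ C := decreasingOrderProb_nonneg fun j => (hq j.succ).le
    calc Measure.pi (fun i => powerLaw (q i)) (strictAntiBelow (n + 1) t)
        = ∫⁻ s in Set.Iio t, Measure.pi (fun j => powerLaw (q j.succ)) (strictAntiBelow n s)
            ∂powerLaw (q 0) := pi_strictAntiBelow_succ _ t
      _ = ∫⁻ s in Set.Ioo 0 t, ENNReal.ofReal (q 0 * C / (q 0 + B))
            * ENNReal.ofReal ((q 0 + B) * s ^ (q 0 + B - 1)) := by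
        rw [setLIntegral_Iio_powerLaw _ ht₁]
        refine setLIntegral_congr_fun measurableSet_Ioo fun s hs => ?_
        have hs₀ := hs.1
        rw [ih' s hs₀.le (hs.2.le.trans ht₁), ← ENNReal.ofReal_mul (by positivity),
          ← ENNReal.ofReal_mul (by positivity), add_sub_right_comm, Real.rpow_add hs₀]
        congr 1
        field_simp
      _ = ENNReal.ofReal (t ^ (∑ i, q i) * decreasingOrderProb q) := by
        rw [lintegral_const_mul' _ _ ENNReal.ofReal_ne_top, setLIntegral_congr Ioo_ae_eq_Ioc,
          lintegral_Ioc_mul_rpow_sub_one (by positivity) ht₀,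
          ← ENNReal.ofReal_mul (by positivity), decreasingOrderProb_succ, Fin.sum_univ_succ]
        congr 1
        ring

theorem pi_powerLaw_setOf_strictAnti {n : ℕ} (q : Fin n → ℝ) (hq : ∀ i, 0 < q i) :
    Measure.pi (fun i => powerLaw (q i)) {x | StrictAnti x}
      = ENNReal.ofReal (decreasingOrderProb q) := by
  have := fun i => isProbabilityMeasure_powerLaw (hq i)
  have hae : {x : Fin n → ℝ | StrictAnti x} =ᵐ[Measure.pi fun i => powerLaw (q i)]
      strictAntiBelow n 1 := by
    filter_upwards [ae_all_iff.2 fun i =>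
      Measure.tendsto_eval_ae_ae.eventually (ae_powerLaw_lt_one (q i))] with x hx
    exact propext (and_iff_left hx).symm
  rw [measure_congr hae, pi_powerLaw_strictAntiBelow q hq zero_le_one le_rfl, Real.one_rpow,
    one_mul]

theorem power_law_decreasing_order_probability (n : ℕ) {Ω : Type*} [MeasureSpace Ω]
    (P : Measure Ω) [IsProbabilityMeasure P]
    (q : Fin n → ℝ) (hq : ∀ i, 0 < q i)
    (V : Fin n → Ω → ℝ) (hVm : ∀ i, Measurable (V i))
    (hindep : iIndepFun V P)
    (hcdf : ∀ i, ∀ t ∈ Set.Icc (0 : ℝ) 1, (P {ω | V i ω ≤ t}).toReal = t ^ q i)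
    (π : Equiv.Perm (Fin n)) :
    (P {ω | StrictAnti fun i => V (π i) ω}).toReal =
      ∏ i : Fin n, q (π i) / ∑ j ∈ Finset.Ici i, q (π j) := by
  have hlaw : ∀ i, P.map (V i) = powerLaw (q i) := fun i =>
    map_eq_powerLaw (hVm i) (hq i) (hcdf i)
  have hjoint : P.map (fun ω i => V (π i) ω) = Measure.pi fun i => powerLaw (q (π i)) := by
    rw [(iIndepFun_iff_map_fun_eq_pi_map fun i => (hVm (π i)).aemeasurable).1
      (hindep.precomp π.injective)]
    simp only [hlaw]
  have hevent : {ω | StrictAnti fun i => V (π i) ω}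
      = (fun ω i => V (π i) ω) ⁻¹' {x | StrictAnti x} := rfl
  rw [hevent, ← Measure.map_apply (measurable_pi_lambda _ fun i => hVm (π i))
    (measurableSet_setOf_strictAnti n), hjoint, pi_powerLaw_setOf_strictAnti _ fun i => hq (π i),
    ENNReal.toReal_ofReal (decreasingOrderProb_nonneg fun i => (hq (π i)).le)]
  rfl
end

section
/- Exchanging two adjacent entries in a permutation changes the biased likelihood monotonically with the preference values: if π' is obtained from π by swapping positions k and k+1, then L(q | π') ≥ L(q | π) if and only if q_{π(k+1)} ≥ q_{π(k)} (with L as the biased permutation likelihood and all q_i > 0). -/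
/-!
The numerators of `L q π` multiply to `∏ i, q i` whatever `π` is, so `L q π` is that constant
divided by the product of the tail sums `∑ j ≥ i, q (π j)`. Swapping positions `k` and `k + 1`
leaves every tail sum unchanged except the one starting at `k + 1`, in which `q (π (k + 1))` is
replaced by `q (π k)`; the likelihood increases exactly when that tail sum decreases.
-/

open Finset

namespace Finset

theorem sum_comp_swap_of_mem_iff {α M : Type*} [DecidableEq α] [AddCommMonoid M]
    {a b : α} {s : Finset α} (f : α → M) (hab : a ∈ s ↔ b ∈ s) :
    ∑ j ∈ s, f (Equiv.swap a b j) = ∑ j ∈ s, f j := by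
  refine sum_equiv (Equiv.swap a b) (fun j => ?_) fun _ _ => rfl
  rcases eq_or_ne j a with rfl | hja
  · simpa using hab
  rcases eq_or_ne j b with rfl | hjb
  · simpa using hab.symm
  rw [Equiv.swap_apply_of_ne_of_ne hja hjb]

theorem prod_le_prod_iff_of_eq_of_ne {ι R : Type*} [Fintype ι] [CommRing R] [LinearOrder R]
    [IsStrictOrderedRing R] {f g : ι → R} (a : ι) (hf : ∀ i, 0 < f i)
    (hfg : ∀ i ≠ a, f i = g i) :
    ∏ i, f i ≤ ∏ i, g i ↔ f a ≤ g a := by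
  classical
  have hrest : ∏ i ∈ univ.erase a, g i = ∏ i ∈ univ.erase a, f i :=
    prod_congr rfl fun i hi => (hfg i (ne_of_mem_erase hi)).symm
  rw [← mul_prod_erase univ f (mem_univ a), ← mul_prod_erase univ g (mem_univ a), hrest,
    mul_le_mul_iff_of_pos_right (prod_pos fun i _ => hf i)]

end Finset

section TailSum

variable {n : ℕ} (q : Fin n → ℝ) (π : Equiv.Perm (Fin n))

def tailSum (i : Fin n) : ℝ := ∑ j ∈ Ici i, q (π j)

theorem tailSum_pos (hq : ∀ i, 0 < q i) (i : Fin n) : 0 < tailSum q π i :=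
  sum_pos (fun j _ => hq (π j)) ⟨i, mem_Ici.mpr le_rfl⟩

theorem L_eq_prod_div_prod_tailSum : L q π = (∏ i, q i) / ∏ i, tailSum q π i := by
  rw [L, prod_div_distrib, Equiv.prod_comp π q]
  rfl

theorem L_le_L_iff (hq : ∀ i, 0 < q i) (ρ : Equiv.Perm (Fin n)) :
    L q π ≤ L q ρ ↔ ∏ i, tailSum q ρ i ≤ ∏ i, tailSum q π i := by
  simp only [L_eq_prod_div_prod_tailSum]
  exact div_le_div_iff_of_pos_left (prod_pos fun i _ => hq i)
    (prod_pos fun i _ => tailSum_pos q π hq i) (prod_pos fun i _ => tailSum_pos q ρ hq i)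

variable {k k' : Fin n}

theorem tailSum_mul_swap_of_ne (hk : k ⋖ k') {i : Fin n} (hi : i ≠ k') :
    tailSum q (π * Equiv.swap k k') i = tailSum q π i := by
  refine sum_comp_swap_of_mem_iff (q ∘ π) ?_
  simp only [mem_Ici]
  exact ⟨fun hik => hik.trans hk.le, fun hik' => hk.le_of_lt (lt_of_le_of_ne hik' hi)⟩

theorem tailSum_mul_swap_add (hk : k < k') :
    tailSum q (π * Equiv.swap k k') k' + q (π k') = tailSum q π k' + q (π k) := by
  have hfix : ∑ j ∈ Ioi k', q ((π * Equiv.swap k k') j) = ∑ j ∈ Ioi k', q (π j) :=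
    sum_comp_swap_of_mem_iff (q ∘ π) (by simp [hk.le])
  rw [tailSum, tailSum, ← add_sum_Ioi_eq_sum_Ici, ← add_sum_Ioi_eq_sum_Ici, hfix,
    Equiv.Perm.mul_apply, Equiv.swap_apply_right]
  ring

end TailSum

theorem adjacent_swap_monotone (n : ℕ) (q : Fin n → ℝ) (hq : ∀ i, 0 < q i)
    (π : Equiv.Perm (Fin n)) (k : Fin n) (h : (k : ℕ) + 1 < n) :
    L q π ≤ L q (π * Equiv.swap k ⟨(k : ℕ) + 1, h⟩) ↔
      q (π k) ≤ q (π ⟨(k : ℕ) + 1, h⟩) := by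
  set k' : Fin n := ⟨(k : ℕ) + 1, h⟩
  have hk : k ⋖ k' := Fin.covBy_iff.mpr (Order.covBy_succ (k : ℕ))
  rw [L_le_L_iff q π hq, prod_le_prod_iff_of_eq_of_ne k' (tailSum_pos q _ hq)
    fun i hi => tailSum_mul_swap_of_ne q π hk hi]
  have hswap := tailSum_mul_swap_add q π hk.lt
  constructor <;> intro <;> linarith
end

section
/- If q and r are vectors of strictly positive reals such that L(q | π) = L(r | π) for every permutation π of {1,…,n} (n ≥ 2), then r is a positive scalar multiple of q. -/
/-!
Exchanging the items in the last two positions of a ranking changes only the last factors of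
the likelihood, `q a / (q a + q b) · 1` against `q b / (q a + q b) · 1`; so the ratio of the two
likelihoods is `q a / q b`. Equal likelihoods therefore force `q a / q b = r a / r b` for all
items `a ≠ b`, i.e. `r` is proportional to `q`.
-/

open Finset

open Equiv

lemma exists_pos_smul_eq_of_mul_eq_mul {ι : Type*} [Nonempty ι] {q r : ι → ℝ}
    (hq : ∀ i, 0 < q i) (hr : ∀ i, 0 < r i) (h : ∀ a b, q a * r b = q b * r a) :
    ∃ c : ℝ, 0 < c ∧ r = c • q := by
  obtain ⟨i₀⟩ := ‹Nonempty ι›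
  refine ⟨r i₀ / q i₀, div_pos (hr i₀) (hq i₀), funext fun a => ?_⟩
  rw [Pi.smul_apply, smul_eq_mul, div_mul_eq_mul_div, eq_div_iff (hq i₀).ne']
  linear_combination h i₀ a

namespace L

variable {n : ℕ}

lemma pos {q : Fin n → ℝ} (hq : ∀ i, 0 < q i) (π : Perm (Fin n)) : 0 < L q π :=
  prod_pos fun i _ => div_pos (hq _) (sum_pos (fun _ _ => hq _) ⟨i, mem_Ici.2 le_rfl⟩)

lemma eq_prod_div_prod (q : Fin n → ℝ) (π : Perm (Fin n)) :
    L q π = (∏ i, q i) / ∏ i, ∑ j ∈ Ici i, q (π j) := by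
  rw [L, prod_div_distrib, Equiv.prod_comp]

section SwapLastTwo

variable {k m : Fin n}

lemma sum_Ici_mul_swap_of_ne (hkm : k ⋖ m) (hm : IsTop m) (q : Fin n → ℝ) (π : Perm (Fin n))
    {i : Fin n} (hi : i ≠ m) :
    ∑ j ∈ Ici i, q ((π * swap k m) j) = ∑ j ∈ Ici i, q (π j) := by
  have hik : i ≤ k := hkm.le_of_lt ((hm i).lt_of_ne hi)
  refine (swap k m).sum_comp (Ici i) (fun j => q (π j)) fun j hj => ?_
  obtain ⟨-, rfl | rfl⟩ := swap_apply_ne_self_iff.1 hj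
  · exact mem_Ici.2 hik
  · exact mem_Ici.2 (hik.trans hkm.le)

lemma prod_sum_Ici_mul_eq_prod_sum_Ici_mul_swap (hkm : k ⋖ m) (hm : IsTop m)
    (q : Fin n → ℝ) (π : Perm (Fin n)) :
    (∏ i, ∑ j ∈ Ici i, q (π j)) * q (π k) =
      (∏ i, ∑ j ∈ Ici i, q ((π * swap k m) j)) * q (π m) := by
  have hIci : Ici m = {m} := by ext j; simp [le_antisymm_iff, hm j]
  rw [← mul_prod_erase _ _ (mem_univ m), ← mul_prod_erase _ _ (mem_univ m), hIci,
    sum_singleton, sum_singleton, Perm.mul_apply, swap_apply_right,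
    prod_congr rfl fun i hi => sum_Ici_mul_swap_of_ne hkm hm q π (ne_of_mem_erase hi)]
  ring

lemma mul_swap_mul (hkm : k ⋖ m) (hm : IsTop m) {q : Fin n → ℝ} (hq : ∀ i, 0 < q i)
    (π : Perm (Fin n)) :
    L q (π * swap k m) * q (π k) = L q π * q (π m) := by
  have hpos (σ : Perm (Fin n)) : 0 < ∏ i, ∑ j ∈ Ici i, q (σ j) :=
    prod_pos fun i _ => sum_pos (fun _ _ => hq _) ⟨i, mem_Ici.2 le_rfl⟩
  rw [eq_prod_div_prod, eq_prod_div_prod, div_mul_eq_mul_div, div_mul_eq_mul_div,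
    div_eq_div_iff (hpos _).ne' (hpos _).ne']
  linear_combination (∏ i, q i) * prod_sum_Ici_mul_eq_prod_sum_Ici_mul_swap hkm hm q π

lemma mul_eq_mul_of_forall_eq (hkm : k ⋖ m) (hm : IsTop m) {q r : Fin n → ℝ}
    (hq : ∀ i, 0 < q i) (hr : ∀ i, 0 < r i) (h : ∀ π, L q π = L r π) (π : Perm (Fin n)) :
    q (π k) * r (π m) = q (π m) * r (π k) := by
  have hq' := mul_swap_mul hkm hm hq π
  have hr' := mul_swap_mul hkm hm hr π
  rw [← h, ← h] at hr'
  refine mul_left_cancel₀ (pos hq (π * swap k m)).ne' ?_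
  linear_combination r (π m) * hq' - q (π m) * hr'

end SwapLastTwo

end L

theorem likelihood_determines_preferences (n : ℕ) (hn : 2 ≤ n)
    (q r : Fin n → ℝ) (hq : ∀ i, 0 < q i) (hr : ∀ i, 0 < r i)
    (h : ∀ π : Equiv.Perm (Fin n), L q π = L r π) :
    ∃ c : ℝ, 0 < c ∧ r = c • q := by
  obtain ⟨p, rfl⟩ : ∃ p, n = p + 2 := ⟨n - 2, by omega⟩
  have hkm : (Fin.last p).castSucc ⋖ (Fin.last p).succ :=
    Fin.orderSucc_castSucc (Fin.last p) ▸
      Order.covBy_succ_of_not_isMax (Fin.castSucc_lt_last _).not_isMax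
  have hm : IsTop (Fin.last p).succ := fun i => (Fin.succ_last p).symm ▸ Fin.le_last i
  refine exists_pos_smul_eq_of_mul_eq_mul hq hr fun a b => ?_
  rcases eq_or_ne a b with rfl | hab
  · rfl
  obtain ⟨π, hπ⟩ := Perm.exists_extending_pair ![(Fin.last p).castSucc, (Fin.last p).succ] ![a, b]
    (injective_pair_iff_ne.2 hkm.ne) (injective_pair_iff_ne.2 hab)
  have hπk : π (Fin.last p).castSucc = a := hπ 0
  have hπm : π (Fin.last p).succ = b := hπ 1
  simpa only [hπk, hπm] using L.mul_eq_mul_of_forall_eq hkm hm hq hr h π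
end
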